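/- Let x be a binary sequence of length n ≥ 1 and let x̌ = x‖x̄ be the concatenation of x with its bitwise complement (of length 2n). Then β_{x̌} = γ_x + (1/2)^{n−1}·β_x + (1/2)^n·δ_x, where the coefficients of x̌ are computed with respect to its length 2n. -/

import Mathlib

open Finset

/-- The coefficient `α_x`. -/
noncomputable def alphaC {n : ℕ} (x : Fin n → Bool) : ℝ :=
  (∑ i ∈ univ.filter (fun i : Fin n => x i = false),
     ∑ j ∈ univ.filter (fun j : Fin n => x j = false ∧ i < j),
       ((1:ℝ)/2) ^ ((j : ℕ) - (i : ℕ)))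
  + ∑ i ∈ univ.filter (fun i : Fin n => x i = true),
      ∑ j ∈ univ.filter (fun j : Fin n => x j = true ∧ i < j),
        ((1:ℝ)/2) ^ ((j : ℕ) - (i : ℕ))

/-- The coefficient `β_x`. -/
noncomputable def betaC {n : ℕ} (x : Fin n → Bool) : ℝ :=
  (∑ i ∈ univ.filter (fun i : Fin n => x i = false),
     ∑ j ∈ univ.filter (fun j : Fin n => x j = false ∧ i < j),
       ((1:ℝ)/2) ^ (n - ((j : ℕ) - (i : ℕ))))
  + ∑ i ∈ univ.filter (fun i : Fin n => x i = true),
      ∑ j ∈ univ.filter (fun j : Fin n => x j = true ∧ i < j),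
        ((1:ℝ)/2) ^ (n - ((j : ℕ) - (i : ℕ)))

/-- The coefficient `γ_x`. -/
noncomputable def gammaC {n : ℕ} (x : Fin n → Bool) : ℝ :=
  (∑ i ∈ univ.filter (fun i : Fin n => x i = false),
     ∑ j ∈ univ.filter (fun j : Fin n => x j = true ∧ i < j),
       ((1:ℝ)/2) ^ (n - ((j : ℕ) - (i : ℕ))))
  + ∑ i ∈ univ.filter (fun i : Fin n => x i = true),
      ∑ j ∈ univ.filter (fun j : Fin n => x j = false ∧ i < j),
        ((1:ℝ)/2) ^ (n - ((j : ℕ) - (i : ℕ)))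

/-- The coefficient `δ_x`. -/
noncomputable def deltaC {n : ℕ} (x : Fin n → Bool) : ℝ :=
  (∑ i ∈ univ.filter (fun i : Fin n => x i = false),
     ∑ j ∈ univ.filter (fun j : Fin n => x j = true ∧ i < j),
       ((1:ℝ)/2) ^ ((j : ℕ) - (i : ℕ)))
  + ∑ i ∈ univ.filter (fun i : Fin n => x i = true),
      ∑ j ∈ univ.filter (fun j : Fin n => x j = false ∧ i < j),
        ((1:ℝ)/2) ^ ((j : ℕ) - (i : ℕ))

/-!
Sort the pairs `i < j` of positions of `x‖x̄` by the halves they lie in. A pair inside one half has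
gap `d < n`, so its weight `(1/2)^(2n-d)` is `(1/2)^n (1/2)^(n-d)`; since `x̄` has the same pairs of
equal letters as `x`, the two halves give `2 (1/2)^n β_x = (1/2)^(n-1) β_x`. A cross pair
`(i, n + j)` carries equal letters iff `x i ≠ x j`, and then weighs `(1/2)^(n-(j-i))` if `i < j`
and `(1/2)^n (1/2)^(i-j)` if `j < i`: these give `γ_x` and `(1/2)^n δ_x`.
-/

noncomputable def pairSum {α : Type*} {n : ℕ} (r : α → α → Prop) [DecidableRel r] (w : ℕ → ℝ)
    (x : Fin n → α) : ℝ :=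
  ∑ i, ∑ j with r (x i) (x j) ∧ i < j, w (j - i)

lemma pairSum_mul_left {α : Type*} {n : ℕ} (r : α → α → Prop) [DecidableRel r] (c : ℝ)
    (w : ℕ → ℝ) (x : Fin n → α) :
    pairSum r (fun d => c * w d) x = c * pairSum r w x := by
  simp only [pairSum, mul_sum]

lemma pairSum_congr_weight {α : Type*} {n : ℕ} (r : α → α → Prop) [DecidableRel r]
    {w w' : ℕ → ℝ} (h : ∀ d < n, w d = w' d) (x : Fin n → α) :
    pairSum r w x = pairSum r w' x :=
  sum_congr rfl fun i _ => sum_congr rfl fun j _ => h _ (by omega)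

lemma pairSum_append {α : Type*} {m n : ℕ} (r : α → α → Prop) [DecidableRel r] (w : ℕ → ℝ)
    (x : Fin m → α) (y : Fin n → α) :
    pairSum r w (Fin.append x y) =
      pairSum r w x + pairSum r w y + ∑ i, ∑ j with r (x i) (y j), w (m + j - i) := by
  have hcross : ∀ (i : Fin m) (j : Fin n), (i : ℕ) < m + j := fun i j => by omega
  have hnot : ∀ (i : Fin n) (j : Fin m), ¬ m + (i : ℕ) < j := fun i j => by omega
  simp only [pairSum, sum_filter, Fin.sum_univ_add, Fin.append_left, Fin.append_right, Fin.lt_def,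
    Fin.val_castAdd, Fin.val_natAdd, hcross, hnot, Nat.add_lt_add_iff_left, Nat.add_sub_add_left,
    and_true, and_false, if_false, sum_const_zero, sum_add_distrib]
  ring

lemma sum_sum_filter_ne_eq_sum_lt {ι α : Type*} [Fintype ι] [LinearOrder ι] [DecidableEq α]
    (x : ι → α) (g : ι → ι → ℝ) :
    ∑ i, ∑ j with x i ≠ x j, g i j = ∑ i, ∑ j with x i ≠ x j ∧ i < j, (g i j + g j i) := by
  have hsplit : ∀ i j, (if x i ≠ x j then g i j else 0) =
      (if x i ≠ x j ∧ i < j then g i j else 0) + (if x j ≠ x i ∧ j < i then g i j else 0) := by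
    intro i j
    rcases lt_trichotomy i j with h | rfl | h
    · simp [h, h.not_gt, ne_comm]
    · simp
    · simp [h, h.not_gt, ne_comm]
  simp only [sum_filter, hsplit, sum_add_distrib]
  rw [sum_comm (f := fun i j => if x j ≠ x i ∧ j < i then g i j else 0)]

lemma pairSum_eq_sum_false_add_sum_true {n : ℕ} (r : Bool → Bool → Prop) [DecidableRel r]
    (w : ℕ → ℝ) (x : Fin n → Bool) :
    pairSum r w x =
      (∑ i with x i = false, ∑ j with r false (x j) ∧ i < j, w (j - i)) +
        ∑ i with x i = true, ∑ j with r true (x j) ∧ i < j, w (j - i) := by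
  rw [pairSum, ← sum_filter_add_sum_filter_not univ (fun i => x i = false)]
  congr 1 <;> refine sum_congr (by simp) fun i _ => ?_ <;> simp_all

lemma betaC_eq_pairSum {n : ℕ} (x : Fin n → Bool) :
    betaC x = pairSum (· = ·) (fun d => (1 / 2 : ℝ) ^ (n - d)) x := by
  rw [pairSum_eq_sum_false_add_sum_true]; simp [betaC]

lemma gammaC_eq_pairSum {n : ℕ} (x : Fin n → Bool) :
    gammaC x = pairSum (· ≠ ·) (fun d => (1 / 2 : ℝ) ^ (n - d)) x := by
  rw [pairSum_eq_sum_false_add_sum_true]; simp [gammaC]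

lemma deltaC_eq_pairSum {n : ℕ} (x : Fin n → Bool) :
    deltaC x = pairSum (· ≠ ·) (fun d => (1 / 2 : ℝ) ^ d) x := by
  rw [pairSum_eq_sum_false_add_sum_true]; simp [deltaC]

lemma pairSum_not {n : ℕ} (w : ℕ → ℝ) (x : Fin n → Bool) :
    pairSum (· = ·) w (fun i => !x i) = pairSum (· = ·) w x := by
  simp [pairSum]

lemma pairSum_eq_half_pow_mul_betaC {n : ℕ} (x : Fin n → Bool) :
    pairSum (· = ·) (fun d => (1 / 2 : ℝ) ^ (n + n - d)) x = (1 / 2) ^ n * betaC x := by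
  rw [betaC_eq_pairSum, ← pairSum_mul_left]
  exact pairSum_congr_weight _ (fun d hd => by rw [← pow_add]; congr 1; omega) x

lemma sum_sum_filter_eq_not_eq_gammaC_add_deltaC {n : ℕ} (x : Fin n → Bool) :
    ∑ i, ∑ j with x i = !x j, (1 / 2 : ℝ) ^ (n + n - (n + j - i)) =
      gammaC x + (1 / 2) ^ n * deltaC x := by
  simp only [Bool.eq_not_iff, sum_sum_filter_ne_eq_sum_lt]
  rw [gammaC_eq_pairSum, deltaC_eq_pairSum, ← pairSum_mul_left]
  simp only [pairSum, ← sum_add_distrib]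
  refine sum_congr rfl fun i _ => sum_congr rfl fun j hj => ?_
  have hij : i < j := (mem_filter.1 hj).2.2
  have hjn := j.isLt
  rw [← pow_add]
  congr 2 <;> omega

/-- Lemma 3(d): `β_{x‖x̄} = γ_x + (1/2)^{n-1}·β_x + (1/2)^n·δ_x`. -/
theorem beta_append_compl (n : ℕ) (hn : 1 ≤ n) (x : Fin n → Bool) :
    betaC (Fin.append x (fun i => !(x i))) =
      gammaC x + ((1:ℝ)/2) ^ (n - 1) * betaC x + ((1:ℝ)/2) ^ n * deltaC x := by
  rw [betaC_eq_pairSum, pairSum_append, pairSum_not, pairSum_eq_half_pow_mul_betaC,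
    sum_sum_filter_eq_not_eq_gammaC_add_deltaC]
  obtain ⟨k, rfl⟩ := Nat.exists_eq_add_of_le' hn
  rw [Nat.add_sub_cancel, pow_succ]
  ring
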